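/- arXiv:1803.08089 — 5 statements merged into one kernel-verified Lean document; each statement's English description precedes it below -/
import Mathlib

section
/- Let G₁, G₂ be positive semidefinite d×d matrices, γ > 0, and y ∈ ℝⁿ (viewed in ℝ^d as appropriate). If w₁, w₂ satisfy (Gᵢ + γI)wᵢ = y for i = 1,2, then |‖w₁‖² − ‖w₂‖²| ≤ 2γ⁻³ ‖G₁ − G₂‖_∞ ‖y‖². -/
/-! Write `Aᵢ = Gᵢ + γ I`. Since `⟪Gᵢ v, v⟫ ≥ 0`, testing `Aᵢ v` against `v` gives the coercivity
`γ ‖v‖ ≤ ‖Aᵢ v‖`, hence `‖wᵢ‖ ≤ ‖y‖ / γ`. As `A₁ (w₁ - w₂) = (G₂ - G₁) w₂`, coercivity again gives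
`‖w₁ - w₂‖ ≤ ‖G₁ - G₂‖ ‖y‖ / γ²`, and `|‖w₁‖² - ‖w₂‖²| ≤ ‖w₁ - w₂‖ (‖w₁‖ + ‖w₂‖)` concludes. -/

open Matrix Finset MeasureTheory

noncomputable def opNorm {d : ℕ} (A : Matrix (Fin d) (Fin d) ℝ) : ℝ :=
  ‖Matrix.toEuclideanCLM (𝕜 := ℝ) A‖

noncomputable def frobNorm {m n : ℕ} (A : Matrix (Fin m) (Fin n) ℝ) : ℝ :=
  Real.sqrt (∑ i, ∑ j, (A i j) ^ 2)

open scoped RealInnerProductSpace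

theorem abs_norm_sq_sub_norm_sq_le {E : Type*} [SeminormedAddCommGroup E] (a b : E) :
    |‖a‖ ^ 2 - ‖b‖ ^ 2| ≤ ‖a - b‖ * (‖a‖ + ‖b‖) := by
  rw [sq_sub_sq, abs_mul, abs_of_nonneg (by positivity), mul_comm]
  exact mul_le_mul_of_nonneg_right (abs_norm_sub_norm_le a b) (by positivity)

section RegularizedSolutions

variable {E : Type*} [NormedAddCommGroup E] [InnerProductSpace ℝ E]

theorem mul_norm_le_norm_apply_add_smul {T : E → E} (hT : ∀ x, 0 ≤ ⟪T x, x⟫)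
    (γ : ℝ) (x : E) : γ * ‖x‖ ≤ ‖T x + γ • x‖ := by
  have hsq : γ * ‖x‖ ^ 2 ≤ ‖T x + γ • x‖ * ‖x‖ :=
    calc γ * ‖x‖ ^ 2 ≤ ⟪T x, x⟫ + γ * ‖x‖ ^ 2 := le_add_of_nonneg_left (hT x)
      _ = ⟪T x + γ • x, x⟫ := by rw [inner_add_left, real_inner_smul_left, real_inner_self_eq_norm_sq]
      _ ≤ ‖T x + γ • x‖ * ‖x‖ := real_inner_le_norm _ _
  rcases (norm_nonneg x).eq_or_lt with hx | hx
  · rw [← hx, mul_zero]; exact norm_nonneg _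
  · nlinarith

theorem abs_norm_sq_sub_norm_sq_le_of_apply_add_smul_eq {T₁ T₂ : E →L[ℝ] E}
    (hT₁ : ∀ x, 0 ≤ ⟪T₁ x, x⟫) (hT₂ : ∀ x, 0 ≤ ⟪T₂ x, x⟫) {γ : ℝ} (hγ : 0 < γ) {y w₁ w₂ : E}
    (hw₁ : T₁ w₁ + γ • w₁ = y) (hw₂ : T₂ w₂ + γ • w₂ = y) :
    |‖w₁‖ ^ 2 - ‖w₂‖ ^ 2| ≤ 2 / γ ^ 3 * ‖T₁ - T₂‖ * ‖y‖ ^ 2 := by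
  have hw₁_le : γ * ‖w₁‖ ≤ ‖y‖ := hw₁ ▸ mul_norm_le_norm_apply_add_smul hT₁ γ w₁
  have hw₂_le : γ * ‖w₂‖ ≤ ‖y‖ := hw₂ ▸ mul_norm_le_norm_apply_add_smul hT₂ γ w₂
  have hdiff_eq : T₁ (w₁ - w₂) + γ • (w₁ - w₂) = (T₂ - T₁) w₂ := by
    rw [map_sub, smul_sub, _root_.sub_apply]
    linear_combination (norm := module) hw₁ - hw₂
  have hdiff_le : γ * ‖w₁ - w₂‖ ≤ ‖T₁ - T₂‖ * ‖w₂‖ :=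
    calc γ * ‖w₁ - w₂‖ ≤ ‖(T₂ - T₁) w₂‖ := hdiff_eq ▸ mul_norm_le_norm_apply_add_smul hT₁ γ _
      _ ≤ ‖T₂ - T₁‖ * ‖w₂‖ := (T₂ - T₁).le_opNorm w₂
      _ = ‖T₁ - T₂‖ * ‖w₂‖ := by rw [norm_sub_rev]
  rw [div_mul_eq_mul_div, div_mul_eq_mul_div, le_div_iff₀ (by positivity)]
  calc |‖w₁‖ ^ 2 - ‖w₂‖ ^ 2| * γ ^ 3
      ≤ γ * ((γ * ‖w₁ - w₂‖) * (γ * ‖w₁‖ + γ * ‖w₂‖)) := by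
        nlinarith [abs_norm_sq_sub_norm_sq_le w₁ w₂, pow_pos hγ 3]
    _ ≤ γ * ((‖T₁ - T₂‖ * ‖w₂‖) * (2 * ‖y‖)) := by gcongr; linarith
    _ = (‖T₁ - T₂‖ * ‖y‖) * (2 * (γ * ‖w₂‖)) := by ring
    _ ≤ (‖T₁ - T₂‖ * ‖y‖) * (2 * ‖y‖) := by gcongr
    _ = 2 * ‖T₁ - T₂‖ * ‖y‖ ^ 2 := by ring

end RegularizedSolutions

theorem Matrix.PosSemidef.inner_toEuclideanCLM_self_nonneg {ι : Type*} [Fintype ι]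
    [DecidableEq ι] {G : Matrix ι ι ℝ} (hG : G.PosSemidef) (x : EuclideanSpace ℝ ι) :
    0 ≤ ⟪toEuclideanCLM (𝕜 := ℝ) G x, x⟫ :=
  (isPositive_toEuclideanLin_iff.2 hG).inner_nonneg_left x

theorem sum_sq_eq_norm_toLp_sq {ι : Type*} [Fintype ι] (v : ι → ℝ) :
    ∑ i, v i ^ 2 = ‖WithLp.toLp 2 v‖ ^ 2 := by
  simp [EuclideanSpace.real_norm_sq_eq]

theorem Matrix.toEuclideanCLM_add_smul_toLp {ι : Type*} [Fintype ι] [DecidableEq ι]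
    {G : Matrix ι ι ℝ} {γ : ℝ} {w y : ι → ℝ} (hw : (G + γ • (1 : Matrix ι ι ℝ)) *ᵥ w = y) :
    toEuclideanCLM (𝕜 := ℝ) G (WithLp.toLp 2 w) + γ • WithLp.toLp 2 w =
      WithLp.toLp 2 y := by
  simp [← hw, add_mulVec, smul_mulVec]

theorem stmt2 {d : ℕ} (G₁ G₂ : Matrix (Fin d) (Fin d) ℝ)
    (h1 : G₁.PosSemidef) (h2 : G₂.PosSemidef) (γ : ℝ) (hγ : 0 < γ)
    (y w₁ w₂ : Fin d → ℝ)
    (hw₁ : (G₁ + γ • (1 : Matrix (Fin d) (Fin d) ℝ)) *ᵥ w₁ = y)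
    (hw₂ : (G₂ + γ • (1 : Matrix (Fin d) (Fin d) ℝ)) *ᵥ w₂ = y) :
    |(∑ i, w₁ i ^ 2) - ∑ i, w₂ i ^ 2|
      ≤ 2 / γ ^ 3 * opNorm (G₁ - G₂) * ∑ i, y i ^ 2 := by
  simpa only [sum_sq_eq_norm_toLp_sq, opNorm, map_sub] using
    abs_norm_sq_sub_norm_sq_le_of_apply_add_smul_eq h1.inner_toEuclideanCLM_self_nonneg
      h2.inner_toEuclideanCLM_self_nonneg hγ (toEuclideanCLM_add_smul_toLp hw₁)
      (toEuclideanCLM_add_smul_toLp hw₂)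
end

section
/- Let X ∈ ℝ^{n×d} with rows of norm at most 1 and y ∈ [0,1]ⁿ, and set M(D) = XDXᵀ + nI. Define ∇L(D) = −n Xᵀ M(D)⁻¹ (y yᵀ M(D)⁻¹ + M(D)⁻¹ y yᵀ) M(D)⁻¹ X. Then for all positive semidefinite D₁, D₂, ‖∇L(D₁) − ∇L(D₂)‖_F ≤ 6 ‖D₁ − D₂‖_F. -/
open Matrix Finset MeasureTheory

/-!
Write `A = M(D)⁻¹` and `Y = y yᵀ`, so that `∇L(D) = -n Xᵀ A (Y A + A Y) A X`. As `X D Xᵀ` is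
positive semidefinite, `M(D) = X D Xᵀ + n I` is coercive with constant `n`, hence `‖A‖ ≤ 1/n` in
operator norm; moreover `‖X‖² ≤ n` and `‖Y‖ ≤ ‖y‖² ≤ n`. The resolvent identity
`A₁ - A₂ = A₁ X (D₂ - D₁) Xᵀ A₂` and a telescoping of the cubic `A ↦ A (Y A + A Y) A` leave a single
Frobenius norm in every term, all other factors being measured in operator norm through
`‖P Z Q‖_F ≤ ‖P‖ ‖Z‖_F ‖Q‖`. Altogether
`‖∇L(D₁) - ∇L(D₂)‖_F ≤ n · ‖X‖² · 6 n⁻² ‖Y‖ · n⁻² ‖X‖² ‖D₁ - D₂‖_F ≤ 6 ‖D₁ - D₂‖_F`.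
-/

section Frobenius
attribute [local instance] Matrix.frobeniusSeminormedAddCommGroup Matrix.frobeniusNormedSpace
variable {m n : ℕ}

lemma frobNorm_eq_norm (A : Matrix (Fin m) (Fin n) ℝ) : frobNorm A = ‖A‖ := by
  simp [frobNorm, Matrix.frobenius_norm_def, Real.sqrt_eq_rpow]

lemma frobNorm_sq (A : Matrix (Fin m) (Fin n) ℝ) : frobNorm A ^ 2 = ∑ i, ∑ j, A i j ^ 2 :=
  Real.sq_sqrt (by positivity)

lemma frobNorm_nonneg (A : Matrix (Fin m) (Fin n) ℝ) : 0 ≤ frobNorm A := Real.sqrt_nonneg _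

lemma frobNorm_add_le (A B : Matrix (Fin m) (Fin n) ℝ) :
    frobNorm (A + B) ≤ frobNorm A + frobNorm B := by
  simpa only [frobNorm_eq_norm] using norm_add_le A B

lemma frobNorm_smul (r : ℝ) (A : Matrix (Fin m) (Fin n) ℝ) :
    frobNorm (r • A) = |r| * frobNorm A := by
  simp only [frobNorm_eq_norm, norm_smul, Real.norm_eq_abs]

lemma frobNorm_sub_comm (A B : Matrix (Fin m) (Fin n) ℝ) :
    frobNorm (A - B) = frobNorm (B - A) := by
  simp only [frobNorm_eq_norm, norm_sub_rev]

lemma frobNorm_transpose (A : Matrix (Fin m) (Fin n) ℝ) : frobNorm Aᵀ = frobNorm A := by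
  simp only [frobNorm_eq_norm, frobenius_norm_transpose]

end Frobenius

lemma Matrix.PosSemidef.mul_mul_transpose {m n : ℕ} {D : Matrix (Fin n) (Fin n) ℝ}
    (hD : D.PosSemidef) (X : Matrix (Fin m) (Fin n) ℝ) : (X * D * Xᵀ).PosSemidef := by
  simpa only [conjTranspose_eq_transpose_of_trivial] using hD.mul_mul_conjTranspose_same X

lemma frobNorm_vecMulVec_self {n : ℕ} (y : Fin n → ℝ) :
    frobNorm (vecMulVec y y) = ∑ i, y i ^ 2 := by
  rw [frobNorm, ← Real.sqrt_sq (by positivity : (0 : ℝ) ≤ ∑ i, y i ^ 2), sq (∑ i, _),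
    Finset.sum_mul_sum]
  simp only [vecMulVec_apply, mul_pow]

open scoped Matrix.Norms.L2Operator

section L2
variable {m n p q : ℕ}

lemma sum_mulVec_sq_le_frobNorm_sq (A : Matrix (Fin m) (Fin n) ℝ) (x : Fin n → ℝ) :
    ∑ i, (A *ᵥ x) i ^ 2 ≤ frobNorm A ^ 2 * ∑ j, x j ^ 2 := by
  rw [frobNorm_sq, Finset.sum_mul]
  exact Finset.sum_le_sum fun i _ => Finset.sum_mul_sq_le_sq_mul_sq univ (A i) x

lemma sum_mulVec_sq_le_l2_opNorm_sq (A : Matrix (Fin m) (Fin n) ℝ) (x : Fin n → ℝ) :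
    ∑ i, (A *ᵥ x) i ^ 2 ≤ ‖A‖ ^ 2 * ∑ j, x j ^ 2 := by
  have h : ‖WithLp.toLp 2 (A *ᵥ x)‖ ≤ ‖A‖ * ‖WithLp.toLp 2 x‖ := A.l2_opNorm_mulVec _
  have h2 := pow_le_pow_left₀ (norm_nonneg _) h 2
  rwa [mul_pow, EuclideanSpace.real_norm_sq_eq, EuclideanSpace.real_norm_sq_eq] at h2

lemma l2_opNorm_le_frobNorm (A : Matrix (Fin m) (Fin n) ℝ) : ‖A‖ ≤ frobNorm A := by
  rw [l2_opNorm_def]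
  refine ContinuousLinearMap.opNorm_le_bound _ (frobNorm_nonneg A) fun x => ?_
  refine le_of_sq_le_sq ?_ (mul_nonneg (frobNorm_nonneg A) (norm_nonneg x))
  rw [mul_pow, EuclideanSpace.real_norm_sq_eq, EuclideanSpace.real_norm_sq_eq]
  exact sum_mulVec_sq_le_frobNorm_sq A x.ofLp

lemma frobNorm_mul_le_l2_opNorm_mul (A : Matrix (Fin m) (Fin n) ℝ)
    (B : Matrix (Fin n) (Fin p) ℝ) : frobNorm (A * B) ≤ ‖A‖ * frobNorm B := by
  refine le_of_sq_le_sq ?_ (mul_nonneg (norm_nonneg A) (frobNorm_nonneg B))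
  have hcol : ∀ i j, (A * B) i j = (A *ᵥ Bᵀ j) i := fun i j => rfl
  simp only [mul_pow, frobNorm_sq, hcol]
  rw [Finset.sum_comm, Finset.sum_comm (f := fun i j => B i j ^ 2), Finset.mul_sum]
  exact Finset.sum_le_sum fun j _ => sum_mulVec_sq_le_l2_opNorm_sq A (Bᵀ j)

lemma l2_opNorm_transpose (A : Matrix (Fin m) (Fin n) ℝ) : ‖Aᵀ‖ = ‖A‖ := by
  rw [← conjTranspose_eq_transpose_of_trivial, l2_opNorm_conjTranspose]

lemma frobNorm_mul_le_mul_l2_opNorm (A : Matrix (Fin m) (Fin n) ℝ)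
    (B : Matrix (Fin n) (Fin p) ℝ) : frobNorm (A * B) ≤ frobNorm A * ‖B‖ := by
  rw [← frobNorm_transpose, transpose_mul, ← frobNorm_transpose A, ← l2_opNorm_transpose B,
    mul_comm]
  exact frobNorm_mul_le_l2_opNorm_mul _ _

lemma posDef_add_smul_one {B : Matrix (Fin n) (Fin n) ℝ} (hB : B.PosSemidef) {c : ℝ}
    (hc : 0 < c) : (B + c • 1).PosDef :=
  PosDef.posSemidef_add hB (PosDef.one.smul hc)

open scoped RealInnerProductSpace in
lemma l2_opNorm_inv_add_smul_one_le {B : Matrix (Fin n) (Fin n) ℝ} (hB : B.PosSemidef) {c : ℝ}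
    (hc : 0 < c) : ‖(B + c • 1)⁻¹‖ ≤ c⁻¹ := by
  have hunit : IsUnit (B + c • 1).det :=
    (isUnit_iff_isUnit_det _).mp (posDef_add_smul_one hB hc).isUnit
  rw [← l2_opNorm_toEuclideanCLM]
  refine ContinuousLinearMap.opNorm_le_bound _ (inv_nonneg.2 hc.le) fun x => ?_
  set w := toEuclideanCLM (𝕜 := ℝ) (B + c • 1)⁻¹ x
  have hw : toEuclideanCLM (𝕜 := ℝ) (B + c • 1) w = x := by
    rw [← mul_apply_eq_comp, ← map_mul, mul_nonsing_inv _ hunit, map_one,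
      one_apply_eq_self]
  have hcoercive : c * ‖w‖ ^ 2 ≤ ⟪w, x⟫ := by
    have hBw : 0 ≤ w.ofLp ⬝ᵥ B *ᵥ w.ofLp := by simpa using hB.dotProduct_mulVec_nonneg w.ofLp
    have hww : w.ofLp ⬝ᵥ w.ofLp = ‖w‖ ^ 2 := by
      rw [EuclideanSpace.real_norm_sq_eq]; simp [dotProduct, sq]
    rw [← hw, inner_toEuclideanCLM, add_mulVec, dotProduct_add, smul_mulVec, one_mulVec,
      dotProduct_smul, hww, smul_eq_mul]
    linarith
  have hcs := real_inner_le_norm w x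
  rw [inv_mul_eq_div, le_div_iff₀' hc]
  rcases (norm_nonneg w).eq_or_lt with hw0 | hwpos
  · rw [← hw0, mul_zero]; exact norm_nonneg x
  · exact le_of_mul_le_mul_right (by nlinarith) hwpos

lemma frobNorm_mul_mul_le_of_le {L : Matrix (Fin m) (Fin n) ℝ} (Z : Matrix (Fin n) (Fin p) ℝ)
    {R : Matrix (Fin p) (Fin q) ℝ} {l r : ℝ} (hL : ‖L‖ ≤ l) (hR : ‖R‖ ≤ r) :
    frobNorm (L * Z * R) ≤ l * frobNorm Z * r :=
  calc frobNorm (L * Z * R) ≤ frobNorm (L * Z) * ‖R‖ := frobNorm_mul_le_mul_l2_opNorm _ R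
    _ ≤ ‖L‖ * frobNorm Z * r := mul_le_mul (frobNorm_mul_le_l2_opNorm_mul L Z) hR
        (norm_nonneg R) (mul_nonneg (norm_nonneg L) (frobNorm_nonneg Z))
    _ ≤ l * frobNorm Z * r := mul_le_mul_of_nonneg_right
        (mul_le_mul_of_nonneg_right hL (frobNorm_nonneg Z)) ((norm_nonneg R).trans hR)

lemma l2_opNorm_mul_le_of_le {A : Matrix (Fin m) (Fin n) ℝ} {B : Matrix (Fin n) (Fin p) ℝ}
    {a b : ℝ} (hA : ‖A‖ ≤ a) (hB : ‖B‖ ≤ b) : ‖A * B‖ ≤ a * b :=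
  (l2_opNorm_mul A B).trans (mul_le_mul hA hB (norm_nonneg B) ((norm_nonneg A).trans hA))

lemma l2_opNorm_sq_le_of_row_sq_sum_le {A : Matrix (Fin m) (Fin n) ℝ} {r : ℝ}
    (hA : ∀ i, ∑ j, A i j ^ 2 ≤ r) : ‖A‖ ^ 2 ≤ m * r :=
  calc ‖A‖ ^ 2 ≤ frobNorm A ^ 2 := pow_le_pow_left₀ (norm_nonneg A) (l2_opNorm_le_frobNorm A) 2
    _ = ∑ i, ∑ j, A i j ^ 2 := frobNorm_sq A
    _ ≤ ∑ _i : Fin m, r := Finset.sum_le_sum fun i _ => hA i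
    _ = m * r := by simp

lemma frobNorm_inv_sub_inv_le {X : Matrix (Fin m) (Fin n) ℝ} {D₁ D₂ : Matrix (Fin n) (Fin n) ℝ}
    (h₁ : D₁.PosSemidef) (h₂ : D₂.PosSemidef) {c : ℝ} (hc : 0 < c) :
    frobNorm ((X * D₁ * Xᵀ + c • 1)⁻¹ - (X * D₂ * Xᵀ + c • 1)⁻¹)
      ≤ c⁻¹ ^ 2 * ‖X‖ ^ 2 * frobNorm (D₁ - D₂) := by
  have hinv : ∀ D : Matrix (Fin n) (Fin n) ℝ, D.PosSemidef → ‖(X * D * Xᵀ + c • 1)⁻¹‖ ≤ c⁻¹ :=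
    fun D hD => l2_opNorm_inv_add_smul_one_le (hD.mul_mul_transpose X) hc
  have hunit : ∀ D : Matrix (Fin n) (Fin n) ℝ, D.PosSemidef → IsUnit (X * D * Xᵀ + c • 1) :=
    fun D hD => (posDef_add_smul_one (hD.mul_mul_transpose X) hc).isUnit
  rw [inv_sub_inv (iff_of_true (hunit D₁ h₁) (hunit D₂ h₂)), frobNorm_sub_comm D₁,
    show X * D₂ * Xᵀ + c • 1 - (X * D₁ * Xᵀ + c • 1) = X * (D₂ - D₁) * Xᵀ by
      rw [Matrix.mul_sub, Matrix.sub_mul]; abel,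
    show ∀ A B : Matrix (Fin m) (Fin m) ℝ, A * (X * (D₂ - D₁) * Xᵀ) * B
      = (A * X) * (D₂ - D₁) * (Xᵀ * B) by intro A B; simp only [Matrix.mul_assoc]]
  calc _ ≤ (c⁻¹ * ‖X‖) * frobNorm (D₂ - D₁) * (‖X‖ * c⁻¹) :=
        frobNorm_mul_mul_le_of_le _ (l2_opNorm_mul_le_of_le (hinv D₁ h₁) le_rfl)
          (l2_opNorm_mul_le_of_le (l2_opNorm_transpose X).le (hinv D₂ h₂))
    _ = c⁻¹ ^ 2 * ‖X‖ ^ 2 * frobNorm (D₂ - D₁) := by ring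

lemma frobNorm_mul_mul_mul_sub_le {A₁ A₂ : Matrix (Fin n) (Fin n) ℝ} (Y : Matrix (Fin n) (Fin n) ℝ)
    {a : ℝ} (h₁ : ‖A₁‖ ≤ a) (h₂ : ‖A₂‖ ≤ a) :
    frobNorm (A₁ * Y * A₁ * A₁ - A₂ * Y * A₂ * A₂) ≤ 3 * (a ^ 2 * ‖Y‖) * frobNorm (A₁ - A₂) := by
  have htel : A₁ * Y * A₁ * A₁ - A₂ * Y * A₂ * A₂ = (A₁ - A₂) * (Y * A₁ * A₁)
      + (A₂ * Y) * (A₁ - A₂) * A₁ + (A₂ * Y * A₂) * (A₁ - A₂) := by noncomm_ring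
  have t₁ : frobNorm ((A₁ - A₂) * (Y * A₁ * A₁)) ≤ frobNorm (A₁ - A₂) * (‖Y‖ * a * a) :=
    (frobNorm_mul_le_mul_l2_opNorm _ _).trans <| mul_le_mul_of_nonneg_left
      (l2_opNorm_mul_le_of_le (l2_opNorm_mul_le_of_le le_rfl h₁) h₁) (frobNorm_nonneg _)
  have t₂ : frobNorm ((A₂ * Y) * (A₁ - A₂) * A₁) ≤ (a * ‖Y‖) * frobNorm (A₁ - A₂) * a :=
    frobNorm_mul_mul_le_of_le _ (l2_opNorm_mul_le_of_le h₂ le_rfl) h₁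
  have t₃ : frobNorm ((A₂ * Y * A₂) * (A₁ - A₂)) ≤ (a * ‖Y‖ * a) * frobNorm (A₁ - A₂) :=
    (frobNorm_mul_le_l2_opNorm_mul _ _).trans <| mul_le_mul_of_nonneg_right
      (l2_opNorm_mul_le_of_le (l2_opNorm_mul_le_of_le h₂ le_rfl) h₂) (frobNorm_nonneg _)
  rw [htel]
  linarith [frobNorm_add_le ((A₁ - A₂) * (Y * A₁ * A₁) + (A₂ * Y) * (A₁ - A₂) * A₁)
    ((A₂ * Y * A₂) * (A₁ - A₂)), frobNorm_add_le ((A₁ - A₂) * (Y * A₁ * A₁))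
    ((A₂ * Y) * (A₁ - A₂) * A₁)]

lemma frobNorm_mul_anticomm_mul_sub_le {A₁ A₂ : Matrix (Fin n) (Fin n) ℝ}
    (Y : Matrix (Fin n) (Fin n) ℝ) {a : ℝ} (h₁ : ‖A₁‖ ≤ a) (h₂ : ‖A₂‖ ≤ a) :
    frobNorm (A₁ * (Y * A₁ + A₁ * Y) * A₁ - A₂ * (Y * A₂ + A₂ * Y) * A₂)
      ≤ 6 * (a ^ 2 * ‖Y‖) * frobNorm (A₁ - A₂) := by
  have hsplit : ∀ A : Matrix (Fin n) (Fin n) ℝ,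
      A * (Y * A + A * Y) * A = A * Y * A * A + (Aᵀ * Yᵀ * Aᵀ * Aᵀ)ᵀ := by
    intro A
    simp only [transpose_mul, transpose_transpose, Matrix.mul_add, Matrix.add_mul,
      Matrix.mul_assoc]
  have htr : ∀ A : Matrix (Fin n) (Fin n) ℝ, ‖A‖ ≤ a → ‖Aᵀ‖ ≤ a :=
    fun A hA => (l2_opNorm_transpose A).trans_le hA
  -- `A A Y A` is the transpose of `Aᵀ Yᵀ Aᵀ Aᵀ`, so both halves are instances of the same bound.
  have hleft := frobNorm_mul_mul_mul_sub_le Y h₁ h₂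
  have hright := frobNorm_mul_mul_mul_sub_le Yᵀ (htr A₁ h₁) (htr A₂ h₂)
  rw [l2_opNorm_transpose, ← transpose_sub, frobNorm_transpose] at hright
  rw [hsplit, hsplit, add_sub_add_comm, ← transpose_sub]
  linarith [frobNorm_add_le (A₁ * Y * A₁ * A₁ - A₂ * Y * A₂ * A₂)
    (A₁ᵀ * Yᵀ * A₁ᵀ * A₁ᵀ - A₂ᵀ * Yᵀ * A₂ᵀ * A₂ᵀ)ᵀ,
    frobNorm_transpose (A₁ᵀ * Yᵀ * A₁ᵀ * A₁ᵀ - A₂ᵀ * Yᵀ * A₂ᵀ * A₂ᵀ)]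

end L2

theorem stmt8 {n d : ℕ} (X : Matrix (Fin n) (Fin d) ℝ) (y : Fin n → ℝ)
    (hX : ∀ i, ∑ j, (X i j) ^ 2 ≤ 1) (hy : ∀ i, y i ∈ Set.Icc (0:ℝ) 1)
    (M : Matrix (Fin d) (Fin d) ℝ → Matrix (Fin n) (Fin n) ℝ)
    (hM : ∀ D, M D = X * D * Xᵀ + (n : ℝ) • (1 : Matrix (Fin n) (Fin n) ℝ))
    (gradL : Matrix (Fin d) (Fin d) ℝ → Matrix (Fin d) (Fin d) ℝ)
    (hgrad : ∀ D, gradL D = (-(n : ℝ)) •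
      (Xᵀ * (M D)⁻¹ * (Matrix.vecMulVec y y * (M D)⁻¹ + (M D)⁻¹ * Matrix.vecMulVec y y)
        * (M D)⁻¹ * X))
    (D₁ D₂ : Matrix (Fin d) (Fin d) ℝ) (h1 : D₁.PosSemidef) (h2 : D₂.PosSemidef) :
    frobNorm (gradL D₁ - gradL D₂) ≤ 6 * frobNorm (D₁ - D₂) := by
  obtain rfl | hn := n.eq_zero_or_pos
  · simp [hgrad, frobNorm]
  have hn' : (0 : ℝ) < n := Nat.cast_pos.2 hn
  set Y := vecMulVec y y
  have hXn : ‖X‖ ^ 2 ≤ n := by simpa using l2_opNorm_sq_le_of_row_sq_sum_le hX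
  have hYn : ‖Y‖ ≤ n :=
    calc ‖Y‖ ≤ ∑ i, y i ^ 2 := (l2_opNorm_le_frobNorm Y).trans_eq (frobNorm_vecMulVec_self y)
      _ ≤ ∑ _i : Fin n, 1 := Finset.sum_le_sum fun i _ => pow_le_one₀ (hy i).1 (hy i).2
      _ = n := by simp
  have hinv : ∀ D : Matrix (Fin d) (Fin d) ℝ, D.PosSemidef → ‖(M D)⁻¹‖ ≤ (n : ℝ)⁻¹ :=
    fun D hD => hM D ▸ l2_opNorm_inv_add_smul_one_le (hD.mul_mul_transpose X) hn'
  have hres : frobNorm ((M D₁)⁻¹ - (M D₂)⁻¹) ≤ (n : ℝ)⁻¹ ^ 2 * ‖X‖ ^ 2 * frobNorm (D₁ - D₂) := by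
    simpa only [hM] using frobNorm_inv_sub_inv_le (X := X) h1 h2 hn'
  have hcore := frobNorm_mul_anticomm_mul_sub_le Y (hinv D₁ h1) (hinv D₂ h2)
  have hsub : gradL D₁ - gradL D₂ = (-(n : ℝ)) • (Xᵀ * ((M D₁)⁻¹ * (Y * (M D₁)⁻¹ + (M D₁)⁻¹ * Y)
      * (M D₁)⁻¹ - (M D₂)⁻¹ * (Y * (M D₂)⁻¹ + (M D₂)⁻¹ * Y) * (M D₂)⁻¹) * X) := by
    simp only [hgrad, ← smul_sub, Matrix.mul_sub, Matrix.sub_mul, Matrix.mul_assoc]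
  rw [hsub, frobNorm_smul, abs_neg, Nat.abs_cast]
  calc _ ≤ n * (‖X‖ * frobNorm (_ - _) * ‖X‖) := by
        gcongr; exact frobNorm_mul_mul_le_of_le _ (l2_opNorm_transpose X).le le_rfl
    _ ≤ n * (‖X‖ * (6 * ((n : ℝ)⁻¹ ^ 2 * ‖Y‖) * frobNorm ((M D₁)⁻¹ - (M D₂)⁻¹)) * ‖X‖) := by
        gcongr
    _ ≤ n * (‖X‖ * (6 * ((n : ℝ)⁻¹ ^ 2 * n) * ((n : ℝ)⁻¹ ^ 2 * ‖X‖ ^ 2 * frobNorm (D₁ - D₂)))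
          * ‖X‖) := by
        gcongr; exact frobNorm_nonneg _
    _ = 6 * (‖X‖ ^ 2 / n) ^ 2 * frobNorm (D₁ - D₂) := by field_simp
    _ ≤ 6 * frobNorm (D₁ - D₂) := mul_le_mul_of_nonneg_right
        (mul_le_of_le_one_right (by norm_num) (pow_le_one₀ (by positivity)
          ((div_le_one hn').2 hXn))) (frobNorm_nonneg _)
end

section
/- The minimizer of w ↦ (1/n)‖y − Xw‖² + wᵀD†w over w ∈ Ran(D), where D is positive semidefinite, is given in closed form by w* = DXᵀ(XDXᵀ + nI)⁻¹ y. -/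
open Matrix Finset MeasureTheory

/-!
Write `M = X D Xᵀ + n I` (positive definite), `a = M⁻¹ y` and `t = Xᵀ a`, so that `w* = D t` and
the residual is `y - X w* = n a`. On `Ran(D)`, writing `w = D v`, the identity `D D† D = D` turns
the penalty into `vᵀ D v`, so the objective becomes the quadratic `g v = n⁻¹ ‖y - X D v‖² + vᵀ D v`.
Expanding `g (t + e)` around `t`, the two cross terms are `-2 aᵀ X D e` and `2 tᵀ D e = 2 aᵀ X D e`,
and they cancel; what remains is `g t + n⁻¹ ‖X D e‖² + eᵀ D e ≥ g t`.
-/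

variable {ι κ : Type*} [Fintype ι] [Fintype κ]

section CommSemiring

variable {R : Type*} [CommSemiring R]

lemma dotProduct_mulVec_comm_of_transpose_eq {D : Matrix κ κ R} (hD : Dᵀ = D) (u v : κ → R) :
    u ⬝ᵥ (D *ᵥ v) = v ⬝ᵥ (D *ᵥ u) := by
  conv_lhs => rw [← hD]
  exact dotProduct_transpose_mulVec D u v

lemma mulVec_dotProduct_mulVec_mulVec_of_mul_mul_eq {D Dp : Matrix κ κ R} (hD : Dᵀ = D)
    (hpinv : D * Dp * D = D) (u v : κ → R) :
    (D *ᵥ u) ⬝ᵥ (Dp *ᵥ (D *ᵥ v)) = u ⬝ᵥ (D *ᵥ v) := by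
  rw [dotProduct_comm, ← dotProduct_transpose_mulVec, hD, mulVec_mulVec, mulVec_mulVec, hpinv]

end CommSemiring

lemma sub_mulVec_mul_mul_transpose_eq_smul {R : Type*} [CommRing R] [DecidableEq ι]
    {X : Matrix ι κ R} {D : Matrix κ κ R} {c : R} {y a : ι → R}
    (hsolve : (X * D * Xᵀ + c • 1) *ᵥ a = y) : y - X *ᵥ (D *ᵥ (Xᵀ *ᵥ a)) = c • a := by
  rw [← hsolve, add_mulVec, smul_mulVec, one_mulVec, ← mulVec_mulVec, ← mulVec_mulVec]
  abel

section Field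

variable {R : Type*} [Field R]

/-- The objective in the coordinates `w = D v` of `Ran(D)`, where the penalty `wᵀ D† w` is `vᵀ D v`. -/
def rangeObjective (c : R) (X : Matrix ι κ R) (D : Matrix κ κ R) (y : ι → R) (v : κ → R) : R :=
  c⁻¹ * ((y - X *ᵥ (D *ᵥ v)) ⬝ᵥ (y - X *ᵥ (D *ᵥ v))) + v ⬝ᵥ (D *ᵥ v)

lemma rangeObjective_add {c : R} (hc : c ≠ 0) {X : Matrix ι κ R} {D : Matrix κ κ R}
    (hD : Dᵀ = D) {y a : ι → R} (hres : y - X *ᵥ (D *ᵥ (Xᵀ *ᵥ a)) = c • a) (e : κ → R) :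
    rangeObjective c X D y (Xᵀ *ᵥ a + e) = rangeObjective c X D y (Xᵀ *ᵥ a)
      + c⁻¹ * ((X *ᵥ (D *ᵥ e)) ⬝ᵥ (X *ᵥ (D *ᵥ e))) + e ⬝ᵥ (D *ᵥ e) := by
  set t := Xᵀ *ᵥ a
  set z := X *ᵥ (D *ᵥ e)
  have hresidual : y - X *ᵥ (D *ᵥ (t + e)) = c • a - z := by
    rw [mulVec_add, mulVec_add, ← hres]
    abel
  have hcross : a ⬝ᵥ z = t ⬝ᵥ (D *ᵥ e) :=
    (dotProduct_transpose_mulVec X (D *ᵥ e) a).symm.trans (dotProduct_comm _ _)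
  have hfit : (c • a - z) ⬝ᵥ (c • a - z) = c ^ 2 * (a ⬝ᵥ a) - 2 * c * (t ⬝ᵥ (D *ᵥ e)) + z ⬝ᵥ z := by
    rw [sub_dotProduct, dotProduct_sub, dotProduct_sub, smul_dotProduct, smul_dotProduct,
      dotProduct_smul, dotProduct_smul, dotProduct_comm z a, hcross, smul_eq_mul, smul_eq_mul,
      smul_eq_mul]
    ring
  have hfit₀ : (c • a) ⬝ᵥ (c • a) = c ^ 2 * (a ⬝ᵥ a) := by
    rw [smul_dotProduct, dotProduct_smul, smul_eq_mul, smul_eq_mul]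
    ring
  have hpen : (t + e) ⬝ᵥ (D *ᵥ (t + e))
      = t ⬝ᵥ (D *ᵥ t) + 2 * (t ⬝ᵥ (D *ᵥ e)) + e ⬝ᵥ (D *ᵥ e) := by
    rw [mulVec_add, dotProduct_add, add_dotProduct, add_dotProduct,
      dotProduct_mulVec_comm_of_transpose_eq hD e t]
    ring
  rw [rangeObjective, rangeObjective, hresidual, hres, hfit, hfit₀, hpen]
  field_simp
  ring

end Field

lemma rangeObjective_le {c : ℝ} (hc : 0 < c) {X : Matrix ι κ ℝ} {D : Matrix κ κ ℝ}
    (hD : D.PosSemidef) {y a : ι → ℝ} (hres : y - X *ᵥ (D *ᵥ (Xᵀ *ᵥ a)) = c • a) (v : κ → ℝ) :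
    rangeObjective c X D y (Xᵀ *ᵥ a) ≤ rangeObjective c X D y v := by
  have hDt : Dᵀ = D := by simpa using hD.isHermitian.eq
  obtain ⟨e, rfl⟩ : ∃ e, v = Xᵀ *ᵥ a + e := ⟨v - Xᵀ *ᵥ a, by abel⟩
  rw [rangeObjective_add hc.ne' hDt hres]
  have hfit : 0 ≤ (X *ᵥ (D *ᵥ e)) ⬝ᵥ (X *ᵥ (D *ᵥ e)) := dotProduct_self_star_nonneg _
  have hpen : 0 ≤ e ⬝ᵥ (D *ᵥ e) := by simpa using hD.dotProduct_mulVec_nonneg e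
  have := mul_nonneg (inv_nonneg.mpr hc.le) hfit
  linarith

theorem stmt9_general {n d : ℕ} (hn : 1 ≤ n) (X : Matrix (Fin n) (Fin d) ℝ) (y : Fin n → ℝ)
    (D Dp : Matrix (Fin d) (Fin d) ℝ) (hD : D.PosSemidef)
    (hpinv1 : D * Dp * D = D)
    (f : (Fin d → ℝ) → ℝ)
    (hf : ∀ w, f w = (1 / n : ℝ) * (∑ i, (y i - (X *ᵥ w) i) ^ 2) + w ⬝ᵥ (Dp *ᵥ w))
    (wstar : Fin d → ℝ)
    (hws : wstar = (D * Xᵀ) *ᵥ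
      ((X * D * Xᵀ + (n : ℝ) • (1 : Matrix (Fin n) (Fin n) ℝ))⁻¹ *ᵥ y)) :
    wstar ∈ Set.range D.mulVec ∧ ∀ w ∈ Set.range D.mulVec, f wstar ≤ f w := by
  have hn0 : (0 : ℝ) < n := by exact_mod_cast hn
  have hDt : Dᵀ = D := by simpa using hD.isHermitian.eq
  have hM : (X * D * Xᵀ + (n : ℝ) • 1).PosDef := by
    simpa using PosDef.posSemidef_add (hD.mul_mul_conjTranspose_same X) (PosDef.one.smul hn0)
  set a := (X * D * Xᵀ + (n : ℝ) • (1 : Matrix (Fin n) (Fin n) ℝ))⁻¹ *ᵥ y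
  have hsolve : (X * D * Xᵀ + (n : ℝ) • 1) *ᵥ a = y := by
    rw [mulVec_mulVec, mul_nonsing_inv _ ((isUnit_iff_isUnit_det _).mp hM.isUnit), one_mulVec]
  have hres := sub_mulVec_mul_mul_transpose_eq_smul hsolve
  have hws' : wstar = D *ᵥ (Xᵀ *ᵥ a) := by rw [hws, ← mulVec_mulVec]
  have hf_range : ∀ v, f (D *ᵥ v) = rangeObjective (n : ℝ) X D y v := by
    intro v
    rw [hf, mulVec_dotProduct_mulVec_mulVec_of_mul_mul_eq hDt hpinv1, rangeObjective, one_div]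
    simp [dotProduct, sq]
  refine ⟨⟨_, hws'.symm⟩, ?_⟩
  rintro _ ⟨v, rfl⟩
  rw [hws', hf_range, hf_range]
  exact rangeObjective_le hn0 hD hres v

theorem stmt9 {n d : ℕ} (hn : 1 ≤ n) (X : Matrix (Fin n) (Fin d) ℝ) (y : Fin n → ℝ)
    (D Dp : Matrix (Fin d) (Fin d) ℝ) (hD : D.PosSemidef)
    (hpinv1 : D * Dp * D = D) (hpinv2 : Dp * D * Dp = Dp)
    (hpinv3 : (D * Dp)ᵀ = D * Dp) (hpinv4 : (Dp * D)ᵀ = Dp * D)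
    (f : (Fin d → ℝ) → ℝ)
    (hf : ∀ w, f w = (1 / n : ℝ) * (∑ i, (y i - (X *ᵥ w) i) ^ 2) + w ⬝ᵥ (Dp *ᵥ w))
    (wstar : Fin d → ℝ)
    (hws : wstar = (D * Xᵀ) *ᵥ
      ((X * D * Xᵀ + (n : ℝ) • (1 : Matrix (Fin n) (Fin n) ℝ))⁻¹ *ᵥ y)) :
    wstar ∈ Set.range D.mulVec ∧ ∀ w ∈ Set.range D.mulVec, f wstar ≤ f w :=
  stmt9_general hn X y D Dp hD hpinv1 f hf wstar hws
end

section
/- For any matrix W = [w₁,…,w_T] ∈ ℝ^{d×T} and λ > 0, the squared trace norm satisfies ‖W‖₁² = (1/λ) · inf over positive definite D with tr(D) < 1/λ of Σ_{t=1}^T wₜᵀ D⁻¹ wₜ. -/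
open Matrix Finset MeasureTheory

/-- The square root of a positive semidefinite matrix, as `Matrix.PosSemidef.sqrt` was defined
in the older Mathlib (removed since), specialized to real matrices. -/
noncomputable def Matrix.PosSemidef.sqrt {n : Type*} [Fintype n] [DecidableEq n]
    {A : Matrix n n ℝ} (hA : A.PosSemidef) : Matrix n n ℝ :=
  (hA.1.eigenvectorUnitary : Matrix n n ℝ) * diagonal (fun i => √(hA.1.eigenvalues i)) *
    (star hA.1.eigenvectorUnitary : Matrix n n ℝ)

/-!
Diagonalise `Wᴴ W = U diag(μ) Uᴴ` and put `Y = W U`: its columns are orthogonal with squared norms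
`μ i`, `tr √(Wᴴ W) = ∑ √μᵢ`, and the objective is `tr (Yᴴ D⁻¹ Y)`. With `Z` the matrix of normalised
columns of `Y`, `∑ √μᵢ = tr (Zᴴ D (D⁻¹ Y))`, so Cauchy–Schwarz for the form `(A, B) ↦ tr (Aᴴ D B)`
gives `(∑ √μᵢ)² ≤ tr (Zᴴ D Z) · tr (Yᴴ D⁻¹ Y) ≤ tr D · tr (Yᴴ D⁻¹ Y)`, as `Z Zᴴ` is an orthogonal
projection. Rescalings of `√(Y Yᴴ) + δ` approach this bound as `δ → 0`.
-/

open Filter Topology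

namespace Matrix

variable {m n : Type*} [Fintype m] [Fintype n]

theorem PosSemidef.trace_conjTranspose_mul_mul_sq_le {D : Matrix m m ℝ} (hD : D.PosSemidef)
    (A B : Matrix m n ℝ) :
    (Aᴴ * D * B).trace ^ 2 ≤ (Aᴴ * D * A).trace * (Bᴴ * D * B).trace := by
  have hsymm : (Bᴴ * D * A).trace = (Aᴴ * D * B).trace := by
    rw [← trace_transpose]
    simp [← conjTranspose_eq_transpose_of_trivial, conjTranspose_mul, hD.1.eq, Matrix.mul_assoc]
  have hquad : ∀ t : ℝ, 0 ≤ (Bᴴ * D * B).trace * (t * t) + 2 * (Aᴴ * D * B).trace * t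
      + (Aᴴ * D * A).trace := by
    intro t
    have := (hD.conjTranspose_mul_mul_same (A + t • B)).trace_nonneg
    simp only [conjTranspose_add, conjTranspose_smul, star_trivial, Matrix.add_mul, Matrix.mul_add,
      Matrix.smul_mul, Matrix.mul_smul, trace_add, trace_smul, smul_eq_mul, hsymm] at this
    linarith
  have hdisc := discrim_le_zero hquad
  rw [discrim] at hdisc
  nlinarith [hdisc]

theorem PosSemidef.trace_conjTranspose_mul_mul_le_trace [DecidableEq m] {D : Matrix m m ℝ}
    (hD : D.PosSemidef) {Z : Matrix m n ℝ} (hZ : Z * (Zᴴ * Z) = Z) :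
    (Zᴴ * D * Z).trace ≤ D.trace := by
  have hP : Z * Zᴴ * (Z * Zᴴ) = Z * Zᴴ := by
    rw [Matrix.mul_assoc, ← Matrix.mul_assoc Zᴴ, ← Matrix.mul_assoc Z, hZ]
  set Q := 1 - Z * Zᴴ
  have hQQ : Q * Q = Q := by
    simp only [Q, sub_mul, mul_sub, one_mul, mul_one, hP]
    abel
  have hQH : Qᴴ = Q := by simp [Q]
  have hQD : 0 ≤ (Q * D).trace := by
    have := (hD.conjTranspose_mul_mul_same Q).trace_nonneg
    rwa [hQH, trace_mul_cycle, hQQ] at this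
  have : (Q * D).trace = D.trace - (Zᴴ * D * Z).trace := by
    rw [sub_mul, Matrix.one_mul, trace_sub, Matrix.mul_assoc, trace_mul_comm, Matrix.mul_assoc]
  linarith

theorem PosSemidef.trace_sqrt {A : Matrix n n ℝ} [DecidableEq n] (hA : A.PosSemidef) :
    hA.sqrt.trace = ∑ i, √(hA.1.eigenvalues i) := by
  rw [PosSemidef.sqrt, trace_mul_cycle, Unitary.coe_star_mul_self, Matrix.one_mul,
    trace_diagonal]

theorem IsHermitian.star_eigenvectorUnitary_mul_mul {A : Matrix n n ℝ} [DecidableEq n]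
    (hA : A.IsHermitian) :
    (star hA.eigenvectorUnitary : Matrix n n ℝ) * A * hA.eigenvectorUnitary =
      diagonal hA.eigenvalues := by
  simpa using hA.conjStarAlgAut_star_eigenvectorUnitary

theorem trace_conjTranspose_mul_mul_eq_sum (W : Matrix m n ℝ) (A : Matrix m m ℝ) :
    (Wᴴ * A * W).trace = ∑ t, (fun i => W i t) ⬝ᵥ (A *ᵥ fun i => W i t) := by
  simp only [trace, diag, mul_apply, conjTranspose_apply, star_trivial, dotProduct, mulVec,
    Finset.mul_sum, Finset.sum_mul]
  refine Finset.sum_congr rfl fun t _ => Finset.sum_comm.trans ?_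
  simp only [mul_comm, mul_left_comm]

theorem trace_conjTranspose_mul_mul_of_mul_conjTranspose_eq_one [DecidableEq n] (W : Matrix m n ℝ)
    (A : Matrix m m ℝ) {U : Matrix n n ℝ} (hU : U * Uᴴ = 1) :
    ((W * U)ᴴ * A * (W * U)).trace = (Wᴴ * A * W).trace := by
  rw [conjTranspose_mul, Matrix.mul_assoc, Matrix.mul_assoc, trace_mul_comm,
    Matrix.mul_assoc, Matrix.mul_assoc, Matrix.mul_assoc, hU, Matrix.mul_one, Matrix.mul_assoc]

section OrthogonalColumns

variable [DecidableEq n] {Y : Matrix m n ℝ} {μ : n → ℝ}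

theorem nonneg_of_conjTranspose_mul_self_eq_diagonal (hY : Yᴴ * Y = diagonal μ) (i : n) :
    0 ≤ μ i :=
  posSemidef_diagonal_iff.1 (hY ▸ posSemidef_conjTranspose_mul_self Y) i

variable [DecidableEq m]

theorem sq_sum_sqrt_le_trace_mul_trace_inv (hY : Yᴴ * Y = diagonal μ) {D : Matrix m m ℝ}
    (hD : D.PosDef) :
    (∑ i, √(μ i)) ^ 2 ≤ D.trace * (Yᴴ * D⁻¹ * Y).trace := by
  have hdet := (isUnit_iff_isUnit_det D).1 hD.isUnit
  -- `(√0)⁻¹ = 0`, so the columns of `Z` are the normalised columns of `Y`, or zero.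
  set Z := Y * diagonal fun i => (√(μ i))⁻¹
  have hZY : Zᴴ * Y = diagonal fun i => √(μ i) := by
    simp only [Z, conjTranspose_mul, diagonal_conjTranspose, star_trivial, Matrix.mul_assoc, hY,
      diagonal_mul_diagonal, inv_mul_eq_div, Real.div_sqrt]
  have hZ : Z * (Zᴴ * Z) = Z := by
    rw [← Matrix.mul_assoc Zᴴ, hZY]
    simp only [Z, Matrix.mul_assoc, diagonal_mul_diagonal, ← mul_assoc]
    congr 2
    funext i
    simpa using mul_inv_mul_cancel (√(μ i))⁻¹
  have hDY : (D⁻¹ * Y)ᴴ * D * (D⁻¹ * Y) = Yᴴ * D⁻¹ * Y := by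
    rw [conjTranspose_mul, hD.1.inv.eq, Matrix.mul_assoc, mul_nonsing_inv_cancel_left _ _ hdet]
  calc (∑ i, √(μ i)) ^ 2 = (Zᴴ * D * (D⁻¹ * Y)).trace ^ 2 := by
        rw [Matrix.mul_assoc, mul_nonsing_inv_cancel_left _ _ hdet, hZY, trace_diagonal]
    _ ≤ (Zᴴ * D * Z).trace * ((D⁻¹ * Y)ᴴ * D * (D⁻¹ * Y)).trace :=
        hD.posSemidef.trace_conjTranspose_mul_mul_sq_le _ _
    _ ≤ D.trace * (Yᴴ * D⁻¹ * Y).trace := by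
        rw [hDY]
        exact mul_le_mul_of_nonneg_right (hD.posSemidef.trace_conjTranspose_mul_mul_le_trace hZ)
          (hD.inv.posSemidef.conjTranspose_mul_mul_same Y).trace_nonneg

theorem exists_posDef_trace_eq_and_trace_inv_le (hY : Yᴴ * Y = diagonal μ) {δ : ℝ}
    (hδ : 0 < δ) :
    ∃ D : Matrix m m ℝ, D.PosDef ∧ D.trace = ∑ i, √(μ i) + δ * Fintype.card m ∧
      (Yᴴ * D⁻¹ * Y).trace ≤ ∑ i, √(μ i) := by
  have hμ := nonneg_of_conjTranspose_mul_self_eq_diagonal hY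
  set c : n → ℝ := fun i => (√(μ i))⁻¹
  have hcμ : ∀ i, c i * μ i = √(μ i) := fun i => by simp only [c, inv_mul_eq_div, Real.div_sqrt]
  -- `Y * diagonal c * Yᴴ = √(Y Yᴴ)`; it scales the `i`-th column of `Y` by `√(μ i)`.
  set D := Y * diagonal c * Yᴴ + δ • 1
  have hc : (diagonal c).PosSemidef :=
    posSemidef_diagonal_iff.2 fun i => inv_nonneg.2 (Real.sqrt_nonneg _)
  have hD : D.PosDef := PosDef.posSemidef_add (hc.mul_mul_conjTranspose_same Y) (PosDef.one.smul hδ)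
  have hdet := (isUnit_iff_isUnit_det D).1 hD.isUnit
  have hDY : D * Y = Y * diagonal fun i => √(μ i) + δ := by
    simp only [D, Matrix.add_mul, Matrix.mul_assoc, hY, diagonal_mul_diagonal, hcμ,
      Matrix.smul_mul, Matrix.one_mul, ← diagonal_add, Matrix.mul_add]
    congr 1
    ext
    simp [mul_comm]
  have hDinvY : D⁻¹ * Y = Y * diagonal fun i => (√(μ i) + δ)⁻¹ := by
    have hY1 : Y = D * Y * diagonal fun i => (√(μ i) + δ)⁻¹ := by
      rw [hDY, Matrix.mul_assoc, diagonal_mul_diagonal]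
      simp [mul_inv_cancel₀ (by positivity : √(μ _) + δ ≠ 0)]
    conv_lhs => rw [hY1, Matrix.mul_assoc, nonsing_inv_mul_cancel_left _ _ hdet]
  refine ⟨D, hD, ?_, ?_⟩
  · rw [trace_add, trace_mul_cycle, hY, diagonal_mul_diagonal, trace_diagonal, trace_smul,
      trace_one, smul_eq_mul]
    simp only [mul_comm (μ _), hcμ]
  · rw [Matrix.mul_assoc, hDinvY, ← Matrix.mul_assoc, hY, diagonal_mul_diagonal, trace_diagonal]
    refine Finset.sum_le_sum fun i _ => ?_
    rw [← div_eq_mul_inv, div_le_iff₀ (by positivity)]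
    nlinarith [Real.mul_self_sqrt (hμ i), Real.sqrt_nonneg (μ i)]

theorem exists_posDef_trace_lt_and_trace_inv_le (hY : Yᴴ * Y = diagonal μ) {lam δ : ℝ}
    (hlam : 0 < lam) (hδ : 0 < δ) :
    ∃ D : Matrix m m ℝ, D.PosDef ∧ D.trace < 1 / lam ∧
      (Yᴴ * D⁻¹ * Y).trace ≤ lam * (∑ i, √(μ i)) * (∑ i, √(μ i) + δ * (Fintype.card m + 1)) := by
  obtain ⟨D, hD, htr, hval⟩ := exists_posDef_trace_eq_and_trace_inv_le hY hδ
  set τ := ∑ i, √(μ i)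
  have hτ : 0 ≤ τ := Finset.sum_nonneg fun i _ => Real.sqrt_nonneg _
  set α := lam * (τ + δ * (Fintype.card m + 1)) with hα_def
  have hα : 0 < α := by positivity
  have hinv : (α⁻¹ • D)⁻¹ = α • D⁻¹ := inv_eq_left_inv <| by
    rw [smul_mul_smul_comm, mul_inv_cancel₀ hα.ne', one_smul,
      nonsing_inv_mul _ ((isUnit_iff_isUnit_det D).1 hD.isUnit)]
  refine ⟨α⁻¹ • D, hD.smul (inv_pos.2 hα), ?_, ?_⟩
  · rw [trace_smul, htr, smul_eq_mul, inv_mul_eq_div, div_lt_div_iff₀ hα hlam]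
    nlinarith
  · rw [hinv, Matrix.mul_smul, Matrix.smul_mul, trace_smul, smul_eq_mul, mul_comm α]
    exact (mul_le_mul_of_nonneg_right hval hα.le).trans_eq (by rw [hα_def]; ring)

theorem sInf_trace_inv_eq (hY : Yᴴ * Y = diagonal μ) {lam : ℝ} (hlam : 0 < lam) :
    sInf {s | ∃ D : Matrix m m ℝ, D.PosDef ∧ D.trace < 1 / lam ∧ s = (Yᴴ * D⁻¹ * Y).trace} =
      lam * (∑ i, √(μ i)) ^ 2 := by
  set S := {s | ∃ D : Matrix m m ℝ, D.PosDef ∧ D.trace < 1 / lam ∧ s = (Yᴴ * D⁻¹ * Y).trace}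
  set τ := ∑ i, √(μ i)
  have hlower : ∀ s ∈ S, lam * τ ^ 2 ≤ s := by
    rintro _ ⟨D, hD, htr, rfl⟩
    have hval := (hD.inv.posSemidef.conjTranspose_mul_mul_same Y).trace_nonneg
    have := (sq_sum_sqrt_le_trace_mul_trace_inv hY hD).trans
      (mul_le_mul_of_nonneg_right htr.le hval)
    rw [one_div, inv_mul_eq_div, le_div_iff₀ hlam] at this
    linarith
  have hupper : ∀ δ > 0, ∃ s ∈ S, s ≤ lam * τ * (τ + δ * (Fintype.card m + 1)) := fun δ hδ =>
    let ⟨D, hD, htr, hval⟩ := exists_posDef_trace_lt_and_trace_inv_le hY hlam hδ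
    ⟨_, ⟨D, hD, htr, rfl⟩, hval⟩
  obtain ⟨s₁, hs₁, -⟩ := hupper 1 one_pos
  have hbdd : BddBelow S := ⟨_, hlower⟩
  refine le_antisymm ?_ (le_csInf ⟨s₁, hs₁⟩ hlower)
  have hlim : Tendsto (fun δ : ℝ => lam * τ * (τ + δ * (Fintype.card m + 1))) (𝓝[>] 0)
      (𝓝 (lam * τ ^ 2)) :=
    tendsto_nhdsWithin_of_tendsto_nhds <| (by fun_prop : Continuous fun δ : ℝ =>
      lam * τ * (τ + δ * (Fintype.card m + 1))).tendsto' 0 _ (by ring)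
  refine ge_of_tendsto hlim (eventually_nhdsWithin_of_forall fun δ hδ => ?_)
  obtain ⟨s, hs, hsle⟩ := hupper δ hδ
  exact (csInf_le hbdd hs).trans hsle

end OrthogonalColumns

end Matrix

theorem stmt10 {d T : ℕ} (W : Matrix (Fin d) (Fin T) ℝ) (lam : ℝ) (hlam : 0 < lam) :
    ((Matrix.PosSemidef.sqrt (Matrix.posSemidef_conjTranspose_mul_self W)).trace) ^ 2
      = (1 / lam) * sInf {s : ℝ | ∃ D : Matrix (Fin d) (Fin d) ℝ,
          D.PosDef ∧ D.trace < 1 / lam ∧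
          s = ∑ t, (fun i => W i t) ⬝ᵥ (D⁻¹ *ᵥ fun i => W i t)} := by
  set hW := posSemidef_conjTranspose_mul_self W
  set U : Matrix (Fin T) (Fin T) ℝ := ↑hW.1.eigenvectorUnitary
  have hY : (W * U)ᴴ * (W * U) = diagonal hW.1.eigenvalues := by
    rw [← hW.1.star_eigenvectorUnitary_mul_mul]
    simp [U, Matrix.mul_assoc, star_eq_conjTranspose]
  have hsum_eq_trace : ∀ A : Matrix (Fin d) (Fin d) ℝ,
      ∑ t, (fun i => W i t) ⬝ᵥ (A *ᵥ fun i => W i t) = ((W * U)ᴴ * A * (W * U)).trace := by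
    intro A
    rw [trace_conjTranspose_mul_mul_of_mul_conjTranspose_eq_one _ _
      (Unitary.coe_mul_star_self hW.1.eigenvectorUnitary), trace_conjTranspose_mul_mul_eq_sum]
  simp only [hsum_eq_trace]
  rw [sInf_trace_inv_eq hY hlam, hW.trace_sqrt]
  field_simp
end

section
/- Let H be a nonempty closed convex subset of a Hilbert space with diameter at most 𝒟, and let f₁,…,f_T : H → ℝ be convex and G-Lipschitz. Consider projected online subgradient descent: h^(t+1) = proj_H(h^(t) − γₜ uₜ) with uₜ ∈ ∂fₜ(h^(t)) and step sizes γₜ = c/√t for c > 0. Then the average regret satisfies (1/T)Σₜ fₜ(h^(t)) − min_{h∈H} (1/T)Σₜ fₜ(h) ≤ (1/2)(𝒟²/c + 2cG²)/√T. -/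
/-!
Projected subgradient descent with steps `γₜ = c / √(t+1)`. Since a nearest point of a
convex set is no farther than the original point from any point of the set, a step from `x` to
`p = proj (x - γ g)` satisfies `‖p - z‖² ≤ ‖x - z‖² - 2γ⟪g, x - z⟫ + γ²‖g‖²`, and the
subgradient inequality turns this into
`f x - f z ≤ (‖x - z‖² - ‖p - z‖²) / (2γ) + γ G² / 2`.
Summing over `t`, the distance terms telescope against the increasing weights `√(t+1) / (2c)`
to at most `𝒟² √T / (2c)`, and `∑ 1/√(t+1) ≤ 2√T` bounds the rest by `c G² √T`.
-/

open Matrix Finset MeasureTheory RealInnerProductSpace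

lemma sum_range_one_div_sqrt_succ_le (T : ℕ) :
    ∑ t ∈ range T, 1 / √((t : ℝ) + 1) ≤ 2 * √(T : ℝ) := by
  induction T with
  | zero => simp
  | succ T ih =>
    have hpos : 0 < √((T : ℝ) + 1) := Real.sqrt_pos.mpr (by positivity)
    have hsq : √((T : ℝ) + 1) ^ 2 = T + 1 := Real.sq_sqrt (by positivity)
    have hsqT : √(T : ℝ) ^ 2 = T := Real.sq_sqrt (by positivity)
    have hstep : 1 / √((T : ℝ) + 1) ≤ 2 * (√((T : ℝ) + 1) - √(T : ℝ)) := by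
      rw [div_le_iff₀ hpos]
      nlinarith [sq_nonneg (√(T : ℝ) - √((T : ℝ) + 1))]
    rw [sum_range_succ]
    push_cast
    linarith

lemma sum_range_sub_mul_sqrt_succ_le (a : ℕ → ℝ) {D : ℝ} (haD : ∀ t, a t ≤ D) (T : ℕ) :
    ∑ t ∈ range T, (a t - a (t + 1)) * √((t : ℝ) + 1) ≤ (D - a T) * √(T : ℝ) := by
  induction T with
  | zero => simp
  | succ T ih =>
    have hmono : √(T : ℝ) ≤ √((T : ℝ) + 1) := Real.sqrt_le_sqrt (by linarith)
    rw [sum_range_succ]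
    push_cast
    nlinarith [mul_le_mul_of_nonneg_left hmono (sub_nonneg.mpr (haD T))]

section Projection

variable {E : Type*} [NormedAddCommGroup E] [InnerProductSpace ℝ E]

lemma sq_norm_sub_le_of_isNearest {H : Set E} (hH : Convex ℝ H) {x p z : E} (hp : p ∈ H)
    (hnear : ∀ y ∈ H, ‖p - x‖ ≤ ‖y - x‖) (hz : z ∈ H) :
    ‖p - z‖ ^ 2 ≤ ‖x - z‖ ^ 2 := by
  have : Nonempty H := ⟨⟨p, hp⟩⟩
  have hinf : ‖x - p‖ = ⨅ w : H, ‖x - w‖ := by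
    have hbdd : BddBelow (Set.range fun w : H => ‖x - w‖) :=
      ⟨0, by rintro _ ⟨w, rfl⟩; exact norm_nonneg _⟩
    refine le_antisymm (le_ciInf fun w => ?_) (ciInf_le hbdd ⟨p, hp⟩)
    simpa only [norm_sub_rev x] using hnear w w.2
  have hvar : ⟪x - p, z - p⟫ ≤ 0 := (norm_eq_iInf_iff_real_inner_le_zero hH hp).mp hinf z hz
  have hexpand : ‖x - z‖ ^ 2 = ‖x - p‖ ^ 2 - 2 * ⟪x - p, z - p⟫ + ‖p - z‖ ^ 2 := by
    rw [show x - z = (x - p) - (z - p) by abel, norm_sub_sq_real, norm_sub_rev z p]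
  nlinarith [sq_nonneg ‖x - p‖]

lemma sq_norm_projected_step_sub_le {H : Set E} (hH : Convex ℝ H) {x g p z : E} {γ : ℝ}
    (hp : p ∈ H) (hnear : ∀ y ∈ H, ‖p - (x - γ • g)‖ ≤ ‖y - (x - γ • g)‖) (hz : z ∈ H) :
    ‖p - z‖ ^ 2 ≤ ‖x - z‖ ^ 2 - 2 * γ * ⟪g, x - z⟫ + γ ^ 2 * ‖g‖ ^ 2 := by
  calc ‖p - z‖ ^ 2 ≤ ‖(x - z) - γ • g‖ ^ 2 := by
        simpa only [sub_right_comm x] using sq_norm_sub_le_of_isNearest hH hp hnear hz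
    _ = ‖x - z‖ ^ 2 - 2 * γ * ⟪g, x - z⟫ + γ ^ 2 * ‖g‖ ^ 2 := by
        rw [norm_sub_sq_real, real_inner_smul_right, norm_smul, Real.norm_eq_abs, mul_pow,
          sq_abs, real_inner_comm]
        ring

lemma sub_le_of_projected_subgradient_step {H : Set E} (hH : Convex ℝ H) {x g p z : E}
    {γ G fx fz : ℝ} (hγ : 0 < γ) (hp : p ∈ H)
    (hnear : ∀ y ∈ H, ‖p - (x - γ • g)‖ ≤ ‖y - (x - γ • g)‖) (hz : z ∈ H)
    (hg : ‖g‖ ≤ G) (hsub : fx + ⟪g, z - x⟫ ≤ fz) :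
    fx - fz ≤ (‖x - z‖ ^ 2 - ‖p - z‖ ^ 2) / (2 * γ) + γ * G ^ 2 / 2 := by
  have hstep := sq_norm_projected_step_sub_le hH hp hnear hz
  have hlin : fx - fz ≤ ⟪g, x - z⟫ := by
    rw [← neg_sub x z, inner_neg_right] at hsub
    linarith
  have hgG : ‖g‖ ^ 2 ≤ G ^ 2 := pow_le_pow_left₀ (norm_nonneg g) hg 2
  rw [div_add' _ _ _ (by positivity), le_div_iff₀ (by positivity)]
  nlinarith [mul_le_mul_of_nonneg_left hgG (sq_nonneg γ)]


theorem sum_sub_le_of_projected_subgradient_descent {H : Set E} (hH : Convex ℝ H)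
    {𝒟 G c : ℝ} (hc : 0 < c) (hdiam : ∀ x ∈ H, ∀ y ∈ H, ‖x - y‖ ≤ 𝒟)
    (f : ℕ → E → ℝ) (proj : E → E) (hproj : ∀ x, proj x ∈ H ∧ ∀ y ∈ H, ‖proj x - x‖ ≤ ‖y - x‖)
    (h u : ℕ → E) (h0 : h 0 ∈ H) (hu : ∀ t, ‖u t‖ ≤ G)
    (hupd : ∀ t, h (t + 1) = proj (h t - (c / √((t : ℝ) + 1)) • u t))
    {z : E} (hz : z ∈ H) (hsub : ∀ t, f t (h t) + ⟪u t, z - h t⟫ ≤ f t z) (T : ℕ) :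
    ∑ t ∈ range T, (f t (h t) - f t z) ≤ (𝒟 ^ 2 / (2 * c) + c * G ^ 2) * √(T : ℝ) := by
  have hmem : ∀ t, h t ∈ H := by
    rintro (_ | t)
    · exact h0
    · rw [hupd t]
      exact (hproj _).1
  set a : ℕ → ℝ := fun t => ‖h t - z‖ ^ 2
  have ha0 : 0 ≤ a T := sq_nonneg _
  have haD : ∀ t, a t ≤ 𝒟 ^ 2 := fun t =>
    pow_le_pow_left₀ (norm_nonneg _) (hdiam _ (hmem t) z hz) 2
  have hstep : ∀ t : ℕ, f t (h t) - f t z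
      ≤ (a t - a (t + 1)) * √((t : ℝ) + 1) / (2 * c) + c * G ^ 2 / 2 * (1 / √((t : ℝ) + 1)) := by
    intro t
    have hs : 0 < √((t : ℝ) + 1) := Real.sqrt_pos.mpr (by positivity)
    have hnear := (hproj (h t - (c / √((t : ℝ) + 1)) • u t)).2
    rw [← hupd t] at hnear
    calc f t (h t) - f t z
        ≤ (a t - a (t + 1)) / (2 * (c / √((t : ℝ) + 1))) + c / √((t : ℝ) + 1) * G ^ 2 / 2 :=
          sub_le_of_projected_subgradient_step hH (div_pos hc hs) (hmem (t + 1)) hnear hz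
            (hu t) (hsub t)
      _ = _ := by field_simp
  calc ∑ t ∈ range T, (f t (h t) - f t z)
      ≤ ∑ t ∈ range T, ((a t - a (t + 1)) * √((t : ℝ) + 1) / (2 * c)
          + c * G ^ 2 / 2 * (1 / √((t : ℝ) + 1))) := sum_le_sum fun t _ => hstep t
    _ = (∑ t ∈ range T, (a t - a (t + 1)) * √((t : ℝ) + 1)) / (2 * c)
          + c * G ^ 2 / 2 * ∑ t ∈ range T, 1 / √((t : ℝ) + 1) := by
        rw [sum_add_distrib, sum_div, mul_sum]
    _ ≤ (𝒟 ^ 2 - a T) * √(T : ℝ) / (2 * c) + c * G ^ 2 / 2 * (2 * √(T : ℝ)) := by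
        gcongr
        · exact sum_range_sub_mul_sqrt_succ_le a haD T
        · exact sum_range_one_div_sqrt_succ_le T
    _ ≤ (𝒟 ^ 2 / (2 * c) + c * G ^ 2) * √(T : ℝ) := by
        have : 0 ≤ a T * √(T : ℝ) / (2 * c) := by positivity
        linarith [show (𝒟 ^ 2 - a T) * √(T : ℝ) / (2 * c)
          = 𝒟 ^ 2 / (2 * c) * √(T : ℝ) - a T * √(T : ℝ) / (2 * c) by ring]

end Projection

theorem stmt11_general {E : Type*} [NormedAddCommGroup E] [InnerProductSpace ℝ E]
    (H : Set E) (hcv : Convex ℝ H)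
    (𝒟 G c : ℝ) (hc : 0 < c)
    (hdiam : ∀ x ∈ H, ∀ y ∈ H, ‖x - y‖ ≤ 𝒟)
    (T : ℕ)
    (f : ℕ → E → ℝ)
    (proj : E → E) (hproj : ∀ x, proj x ∈ H ∧ ∀ y ∈ H, ‖proj x - x‖ ≤ ‖y - x‖)
    (h u : ℕ → E) (h0 : h 0 ∈ H)
    (hsub : ∀ t, ‖u t‖ ≤ G ∧ ∀ z ∈ H, f t (h t) + ⟪u t, z - h t⟫ ≤ f t z)
    (hupd : ∀ t, h (t + 1) = proj (h t - (c / Real.sqrt (t + 1)) • u t))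
    (hstar : E) (hstarH : hstar ∈ H) :
    (1 / T : ℝ) * ∑ t ∈ Finset.range T, f t (h t)
        - (1 / T : ℝ) * ∑ t ∈ Finset.range T, f t hstar
      ≤ (1 / 2) * (𝒟 ^ 2 / c + 2 * c * G ^ 2) / Real.sqrt T := by
  have hregret := sum_sub_le_of_projected_subgradient_descent hcv hc hdiam f proj hproj h u h0
    (fun t => (hsub t).1) hupd hstarH (fun t => (hsub t).2 hstar hstarH) T
  calc (1 / T : ℝ) * ∑ t ∈ range T, f t (h t) - (1 / T : ℝ) * ∑ t ∈ range T, f t hstar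
      = (1 / T : ℝ) * ∑ t ∈ range T, (f t (h t) - f t hstar) := by
        rw [sum_sub_distrib, mul_sub]
    _ ≤ (1 / T : ℝ) * ((𝒟 ^ 2 / (2 * c) + c * G ^ 2) * √(T : ℝ)) := by gcongr
    _ = (𝒟 ^ 2 / (2 * c) + c * G ^ 2) * (√(T : ℝ) / T) := by ring
    _ = (1 / 2) * (𝒟 ^ 2 / c + 2 * c * G ^ 2) / Real.sqrt T := by
        rw [Real.sqrt_div_self']
        ring

theorem stmt11 {E : Type*} [NormedAddCommGroup E] [InnerProductSpace ℝ E] [CompleteSpace E]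
    (H : Set E) (hne : H.Nonempty) (hcl : IsClosed H) (hcv : Convex ℝ H)
    (𝒟 G c : ℝ) (hc : 0 < c)
    (hdiam : ∀ x ∈ H, ∀ y ∈ H, ‖x - y‖ ≤ 𝒟)
    (T : ℕ) (hT : 0 < T)
    (f : ℕ → E → ℝ) (hconv : ∀ t, ConvexOn ℝ H (f t))
    (proj : E → E) (hproj : ∀ x, proj x ∈ H ∧ ∀ y ∈ H, ‖proj x - x‖ ≤ ‖y - x‖)
    (h u : ℕ → E) (h0 : h 0 ∈ H)
    (hsub : ∀ t, ‖u t‖ ≤ G ∧ ∀ z ∈ H, f t (h t) + ⟪u t, z - h t⟫ ≤ f t z)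
    (hupd : ∀ t, h (t + 1) = proj (h t - (c / Real.sqrt (t + 1)) • u t))
    (hstar : E) (hstarH : hstar ∈ H)
    (hmin : ∀ z ∈ H, ∑ t ∈ Finset.range T, f t hstar ≤ ∑ t ∈ Finset.range T, f t z) :
    (1 / T : ℝ) * ∑ t ∈ Finset.range T, f t (h t)
        - (1 / T : ℝ) * ∑ t ∈ Finset.range T, f t hstar
      ≤ (1 / 2) * (𝒟 ^ 2 / c + 2 * c * G ^ 2) / Real.sqrt T :=
  stmt11_general H hcv 𝒟 G c hc hdiam T f proj hproj h u h0 hsub hupd hstar hstarH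
end
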